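/- Let Γ be a locally finite graph and (v_n) a sequence of vertices with degrees d_n = d(v_n) → ∞. Suppose for some k ∈ ℕ, s_n^k denotes the number of neighbors w of v_n with d(w) ≤ k, and limsup_n s_n^k / d_n > 0. Then for sufficiently small ε > 0 there do not exist r ∈ ℕ and an operator B with at most r nonzero entries per row and column such that ‖L − B‖ < ε; in particular L is not in the norm closure of ∪_d 𝔹^{(d)}. -/

import Mathlib

/-- The matrix entry of the normalized Laplacian of a locally finite graph. -/
noncomputable def lapEntry {V : Type*} (G : SimpleGraph V)
    [DecidableEq V] [DecidableRel G.Adj] [G.LocallyFinite] (v w : V) : ℝ :=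
  if w = v then 1
  else if G.Adj v w then -(1 / Real.sqrt ((G.degree v : ℝ) * (G.degree w : ℝ)))
  else 0

/-- A bounded operator on `ℓ²(V)` whose matrix has at most `r` nonzero
entries in each row and each column. -/
def Sparse {V : Type*} [DecidableEq V]
    (r : ℕ) (B : lp (fun _ : V => ℂ) 2 →L[ℂ] lp (fun _ : V => ℂ) 2) : Prop :=
  (∀ v : V, {u : V | (B (lp.single 2 v 1)) u ≠ 0}.encard ≤ r) ∧
  (∀ u : V, {v : V | (B (lp.single 2 v 1)) u ≠ 0}.encard ≤ r)

/-! Test `L - B` on the unit vector `δ_v` at a vertex of large degree `d`. Each of the `s` neighbours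
of `v` of degree at most `k` contributes an entry of modulus at least `1/√(k d)` to the column
`L δ_v`, and a sparse `B` can cancel at most `r` of them, so `k d ‖L - B‖² ≥ s - r`. Along the
sequence `s_n ≥ c d_n / 2` infinitely often while `r` is eventually negligible against `d_n`,
which gives `k ‖L - B‖² ≥ c / 4` for `c` the limsup. -/

open Filter

lemma lp.sum_norm_sq_le_norm_sq {ι : Type*} {E : ι → Type*} [∀ i, NormedAddCommGroup (E i)]
    (f : lp E 2) (s : Finset ι) : ∑ i ∈ s, ‖f i‖ ^ 2 ≤ ‖f‖ ^ 2 := by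
  have h := lp.sum_rpow_le_norm_rpow (p := 2) (by norm_num) f s
  simp only [ENNReal.toReal_ofNat, Real.rpow_two] at h
  exact h

lemma lp.norm_apply_single_one_le_opNorm {V : Type*} [DecidableEq V]
    (A : lp (fun _ : V => ℂ) 2 →L[ℂ] lp (fun _ : V => ℂ) 2) (w : V) :
    ‖A (lp.single 2 w 1)‖ ≤ ‖A‖ := by
  simpa [lp.norm_single] using A.le_opNorm (lp.single 2 w 1)

lemma Sparse.card_filter_apply_ne_zero_le {V : Type*} [DecidableEq V] {r : ℕ}
    {B : lp (fun _ : V => ℂ) 2 →L[ℂ] lp (fun _ : V => ℂ) 2} (hB : Sparse r B)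
    (w : V) (s : Finset V) : (s.filter fun u => B (lp.single 2 w 1) u ≠ 0).card ≤ r := by
  have hsub : ((s.filter fun u => B (lp.single 2 w 1) u ≠ 0 : Finset V) : Set V) ⊆
      {u | B (lp.single 2 w 1) u ≠ 0} := fun u hu => (Finset.mem_filter.1 hu).2
  have h := (Set.encard_le_encard hsub).trans (hB.1 w)
  rwa [Set.encard_coe_eq_coe_finsetCard, Nat.cast_le] at h

lemma norm_lapEntry_sq_of_adj {V : Type*} (G : SimpleGraph V)
    [DecidableEq V] [DecidableRel G.Adj] [G.LocallyFinite] {u w : V} (h : G.Adj u w) :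
    ‖(lapEntry G u w : ℂ)‖ ^ 2 = 1 / ((G.degree u : ℝ) * G.degree w) := by
  have hdu : (0 : ℝ) < G.degree u := by exact_mod_cast G.degree_pos_iff_exists_adj u |>.2 ⟨w, h⟩
  have hdw : (0 : ℝ) < G.degree w := by exact_mod_cast G.degree_pos_iff_exists_adj w |>.2 ⟨u, h.symm⟩
  rw [lapEntry, if_neg h.ne.symm, if_pos h, Complex.norm_real, Real.norm_eq_abs, sq_abs,
    neg_sq, div_pow, one_pow, Real.sq_sqrt (by positivity)]

lemma card_sub_le_mul_norm_sub_apply_single_sq {V : Type*} (G : SimpleGraph V)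
    [DecidableEq V] [DecidableRel G.Adj] [G.LocallyFinite]
    {L : lp (fun _ : V => ℂ) 2 →L[ℂ] lp (fun _ : V => ℂ) 2}
    (hL : ∀ v w : V, (L (lp.single 2 w 1)) v = (lapEntry G v w : ℂ))
    {r : ℕ} {B : lp (fun _ : V => ℂ) 2 →L[ℂ] lp (fun _ : V => ℂ) 2} (hB : Sparse r B)
    (k : ℕ) (w : V) :
    (((G.neighborFinset w).filter (fun u => G.degree u ≤ k)).card : ℝ) - r ≤
      k * G.degree w * ‖(L - B) (lp.single 2 w 1)‖ ^ 2 := by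
  set s := (G.neighborFinset w).filter (fun u => G.degree u ≤ k)
  set f := (L - B) (lp.single 2 w 1)
  set T := s.filter fun u => B (lp.single 2 w 1) u = 0
  have hsT : (s.card : ℝ) - r ≤ T.card := by
    have hsplit : T.card + (s.filter fun u => B (lp.single 2 w 1) u ≠ 0).card = s.card :=
      Finset.card_filter_add_card_filter_not _
    have hr := hB.card_filter_apply_ne_zero_le w s
    have : s.card ≤ T.card + r := by omega
    rw [sub_le_iff_le_add]
    exact_mod_cast this
  -- On `T` the column of `L - B` is the column of `L`, whose entries there have size `≥ 1/√(d k)`.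
  have hT : ∀ u ∈ T, 1 ≤ k * G.degree w * ‖f u‖ ^ 2 := by
    intro u hu
    obtain ⟨⟨hadj, hdegu⟩, hBu⟩ := by simpa [T, s] using hu
    have hdu : (0 : ℝ) < G.degree u := by
      exact_mod_cast G.degree_pos_iff_exists_adj u |>.2 ⟨w, hadj.symm⟩
    have hdw : (0 : ℝ) < G.degree w := by
      exact_mod_cast G.degree_pos_iff_exists_adj w |>.2 ⟨u, hadj⟩
    have hfu : f u = lapEntry G u w := by
      simp only [f, sub_apply, lp.coeFn_sub, Pi.sub_apply, hBu, sub_zero, hL]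
    rw [hfu, norm_lapEntry_sq_of_adj G hadj.symm, mul_one_div, le_div_iff₀ (by positivity)]
    have : (G.degree u : ℝ) ≤ k := by exact_mod_cast hdegu
    nlinarith
  calc (s.card : ℝ) - r ≤ T.card := hsT
    _ = ∑ u ∈ T, (1 : ℝ) := by simp
    _ ≤ ∑ u ∈ T, k * G.degree w * ‖f u‖ ^ 2 := Finset.sum_le_sum hT
    _ = k * G.degree w * ∑ u ∈ T, ‖f u‖ ^ 2 := by rw [Finset.mul_sum]
    _ ≤ k * G.degree w * ‖f‖ ^ 2 := by gcongr; exact lp.sum_norm_sq_le_norm_sq f T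

lemma exists_pos_le_norm_sub_of_sparse {V : Type*} (G : SimpleGraph V)
    [DecidableEq V] [DecidableRel G.Adj] [G.LocallyFinite]
    {L : lp (fun _ : V => ℂ) 2 →L[ℂ] lp (fun _ : V => ℂ) 2}
    (hL : ∀ v w : V, (L (lp.single 2 w 1)) v = (lapEntry G v w : ℂ))
    {v : ℕ → V} (hdeg : Tendsto (fun n => G.degree (v n)) atTop atTop) (k : ℕ)
    (hs : 0 < limsup (fun n =>
        (((G.neighborFinset (v n)).filter (fun w => G.degree w ≤ k)).card : ℝ)
          / (G.degree (v n) : ℝ)) atTop) :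
    ∃ ε > (0 : ℝ), ∀ (r : ℕ) (B : lp (fun _ : V => ℂ) 2 →L[ℂ] lp (fun _ : V => ℂ) 2),
      Sparse r B → ε ≤ ‖L - B‖ := by
  set c := limsup (fun n =>
    (((G.neighborFinset (v n)).filter (fun w => G.degree w ≤ k)).card : ℝ)
      / (G.degree (v n) : ℝ)) atTop
  refine ⟨√(c / (4 * (k + 1))), by positivity, fun r B hB => ?_⟩
  by_contra! hlt
  have hfreq := frequently_lt_of_lt_limsup
    (isCoboundedUnder_le_of_le atTop (x := 0) fun n => by positivity) (half_lt_self hs)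
  have hev : ∀ᶠ n in atTop, 4 * r / c < (G.degree (v n) : ℝ) :=
    (tendsto_natCast_atTop_atTop.comp hdeg).eventually_gt_atTop _
  obtain ⟨n, hn_ratio, hn_deg⟩ := (hfreq.and_eventually hev).exists
  set d : ℝ := (G.degree (v n) : ℝ)
  have hd : 0 < d := lt_of_le_of_lt (by positivity) hn_deg
  rw [lt_div_iff₀ hd] at hn_ratio
  rw [div_lt_iff₀ hs] at hn_deg
  have hf : ‖(L - B) (lp.single 2 (v n) 1)‖ ^ 2 < c / (4 * (k + 1)) := by
    rw [← Real.sq_sqrt (by positivity : 0 ≤ c / (4 * (k + 1)))]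
    gcongr
    exact (lp.norm_apply_single_one_le_opNorm _ _).trans_lt hlt
  have hk : (k : ℝ) * (c / (4 * (k + 1))) ≤ c / 4 := by
    rw [mul_div_assoc', div_le_div_iff₀ (by positivity) (by norm_num)]
    nlinarith
  have key := card_sub_le_mul_norm_sub_apply_single_sq G hL hB k (v n)
  have : (k : ℝ) * d * ‖(L - B) (lp.single 2 (v n) 1)‖ ^ 2 ≤ c * d / 4 := by
    calc (k : ℝ) * d * ‖(L - B) (lp.single 2 (v n) 1)‖ ^ 2
        ≤ k * d * (c / (4 * (k + 1))) := by gcongr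
      _ = k * (c / (4 * (k + 1))) * d := by ring
      _ ≤ c / 4 * d := by gcongr
      _ = c * d / 4 := by ring
  linarith

theorem stmt_16_general {V : Type*} (G : SimpleGraph V)
    [DecidableEq V] [DecidableRel G.Adj] [G.LocallyFinite]
    (L : lp (fun _ : V => ℂ) 2 →L[ℂ] lp (fun _ : V => ℂ) 2)
    (hL : ∀ v w : V, (L (lp.single 2 w 1)) v = (lapEntry G v w : ℂ))
    (v : ℕ → V)
    (hdeg : Filter.Tendsto (fun n => G.degree (v n)) Filter.atTop Filter.atTop)
    (k : ℕ)
    (hs : 0 < Filter.limsup (fun n =>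
        (((G.neighborFinset (v n)).filter (fun w => G.degree w ≤ k)).card : ℝ)
          / (G.degree (v n) : ℝ)) Filter.atTop) :
    (∃ ε > (0 : ℝ), ¬ ∃ (r : ℕ) (B : lp (fun _ : V => ℂ) 2 →L[ℂ] lp (fun _ : V => ℂ) 2),
        Sparse r B ∧ ‖L - B‖ < ε) ∧
    L ∉ closure {B : lp (fun _ : V => ℂ) 2 →L[ℂ] lp (fun _ : V => ℂ) 2 | ∃ r, Sparse r B} := by
  obtain ⟨ε, hε, hsep⟩ := exists_pos_le_norm_sub_of_sparse G hL hdeg k hs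
  refine ⟨⟨ε, hε, fun ⟨r, B, hB, hlt⟩ => (hsep r B hB).not_gt hlt⟩, fun hcl => ?_⟩
  obtain ⟨B, ⟨r, hB⟩, hdist⟩ := Metric.mem_closure_iff.1 hcl ε hε
  exact (hsep r B hB).not_gt (dist_eq_norm L B ▸ hdist)

/-- If the degrees `d(v_n)` tend to infinity while the proportion of neighbors
of `v_n` of degree at most `k` stays bounded away from `0`, then the normalized
Laplacian cannot be approximated in norm by sparse operators; in particular it
is not in the norm closure of `⋃_d 𝔹^{(d)}`. -/
theorem stmt_16 {V : Type*} (G : SimpleGraph V)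
    [DecidableEq V] [DecidableRel G.Adj] [G.LocallyFinite] [Countable V]
    (L : lp (fun _ : V => ℂ) 2 →L[ℂ] lp (fun _ : V => ℂ) 2)
    (hL : ∀ v w : V, (L (lp.single 2 w 1)) v = (lapEntry G v w : ℂ))
    (v : ℕ → V)
    (hdeg : Filter.Tendsto (fun n => G.degree (v n)) Filter.atTop Filter.atTop)
    (k : ℕ)
    (hs : 0 < Filter.limsup (fun n =>
        (((G.neighborFinset (v n)).filter (fun w => G.degree w ≤ k)).card : ℝ)
          / (G.degree (v n) : ℝ)) Filter.atTop) :
    (∃ ε > (0 : ℝ), ¬ ∃ (r : ℕ) (B : lp (fun _ : V => ℂ) 2 →L[ℂ] lp (fun _ : V => ℂ) 2),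
        Sparse r B ∧ ‖L - B‖ < ε) ∧
    L ∉ closure {B : lp (fun _ : V => ℂ) 2 →L[ℂ] lp (fun _ : V => ℂ) 2 | ∃ r, Sparse r B} :=
  stmt_16_general G L hL v hdeg k hs
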